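/- Operational bound via Choi rank: Let 𝒩 be a quantum channel on ℂ^d with Choi state J of rank r_c. For unitaries U_1,…,U_N on ℂ^d, define ρ_x = (I ⊗ U_x^t) J (I ⊗ U_x^t)†. If there exists a POVM performing conclusive k-state exclusion on {ρ_x} (i.e., ∑_x Π_x ≤ (N−k)I holds for the support projections), then N·r_c ≤ (N−k)·d², i.e., k ≤ N(d² − r_c)/d². -/

import Mathlib

open Matrix ComplexOrder Kronecker

/-- `P` is the orthogonal projection onto the support (range) of `σ`. -/
def IsSupportProjection {n : Type*} [Fintype n] [DecidableEq n]
    (σ P : Matrix n n ℂ) : Prop :=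
  P.IsHermitian ∧ P * P = P ∧
    LinearMap.range P.mulVecLin = LinearMap.range σ.mulVecLin

/-- Partial trace over the first tensor factor. -/
noncomputable def ptraceA {d : ℕ} (M : Matrix (Fin d × Fin d) (Fin d × Fin d) ℂ) :
    Matrix (Fin d) (Fin d) ℂ :=
  fun b b' => ∑ a : Fin d, M (a, b) (a, b')

/-!
Conjugating `J` by the unitary `I ⊗ U_xᵗ` does not change its rank, so every support
projection `Πₓ` has rank, hence trace, `r_c`. Taking traces in `∑ₓ Πₓ ≤ (N − k) I` gives
`N r_c ≤ (N − k) d²`.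
-/

namespace Matrix

variable {n : Type*} [Fintype n] [DecidableEq n]

theorem trace_eq_rank_of_isIdempotentElem {K : Type*} [Field K] {P : Matrix n n K}
    (hP : IsIdempotentElem P) : P.trace = P.rank := by
  have hlin : IsIdempotentElem (toLin' P) := hP.map toLinAlgEquiv'
  rw [← trace_toLin'_eq, (LinearMap.IsIdempotentElem.isProj_range _ hlin).trace, toLin'_apply',
    Matrix.rank]

theorem rank_conj_of_mem_unitaryGroup {R : Type*} [CommRing R] [StarRing R]
    {A : Matrix n n R} (hA : A ∈ unitaryGroup n R) (J : Matrix n n R) :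
    (A * J * Aᴴ).rank = J.rank := by
  have hdet : IsUnit A.det := (isUnit_iff_isUnit_det A).mp (Unitary.isUnit_coe (U := ⟨A, hA⟩))
  rw [rank_mul_eq_left_of_isUnit_det _ _ (by simpa [det_conjTranspose] using hdet.star),
    rank_mul_eq_right_of_isUnit_det _ _ hdet]

theorem sum_rank_le_of_sum_le_smul_one {𝕜 ι : Type*} [RCLike 𝕜] [Fintype ι]
    {P : ι → Matrix n n 𝕜} (hP : ∀ i, IsIdempotentElem (P i)) {c : ℕ}
    (hle : ((c : 𝕜) • (1 : Matrix n n 𝕜) - ∑ i, P i).PosSemidef) :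
    ∑ i, (P i).rank ≤ c * Fintype.card n := by
  have htrace := hle.trace_nonneg
  rw [trace_sub, trace_smul, trace_one, trace_sum, sub_nonneg] at htrace
  simp only [trace_eq_rank_of_isIdempotentElem (hP _), smul_eq_mul] at htrace
  exact_mod_cast htrace

end Matrix

theorem IsSupportProjection.rank_eq {n : Type*} [Fintype n] [DecidableEq n]
    {σ P : Matrix n n ℂ} (h : IsSupportProjection σ P) : P.rank = σ.rank := by
  rw [Matrix.rank, h.2.2, Matrix.rank]

theorem choi_rank_exclusion_bound_general {d N k : ℕ}
    (J : Matrix (Fin d × Fin d) (Fin d × Fin d) ℂ)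
    (U : Fin N → Matrix (Fin d) (Fin d) ℂ)
    (hU : ∀ x, U x ∈ Matrix.unitaryGroup (Fin d) ℂ)
    (ρ : Fin N → Matrix (Fin d × Fin d) (Fin d × Fin d) ℂ)
    (hρ : ∀ x, ρ x = ((1 : Matrix (Fin d) (Fin d) ℂ) ⊗ₖ (U x)ᵀ) * J *
        ((1 : Matrix (Fin d) (Fin d) ℂ) ⊗ₖ (U x)ᵀ)ᴴ)
    (P : Fin N → Matrix (Fin d × Fin d) (Fin d × Fin d) ℂ)
    (hP : ∀ x, IsSupportProjection (ρ x) (P x))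
    (hLoewner : ((((N - k : ℕ) : ℂ) •
        (1 : Matrix (Fin d × Fin d) (Fin d × Fin d) ℂ)) - ∑ x, P x).PosSemidef) :
    N * J.rank ≤ (N - k) * d ^ 2 := by
  have hrank : ∀ x, (P x).rank = J.rank := fun x => by
    have hUnitary : (1 : Matrix (Fin d) (Fin d) ℂ) ⊗ₖ (U x)ᵀ ∈ unitaryGroup (Fin d × Fin d) ℂ :=
      kronecker_mem_unitary (one_mem _) (transpose_mem_unitaryGroup_iff.mpr (hU x))
    rw [(hP x).rank_eq, hρ x, rank_conj_of_mem_unitaryGroup hUnitary]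
  have hsum := sum_rank_le_of_sum_le_smul_one (fun x => (hP x).2.1) hLoewner
  simpa [hrank, sq] using hsum

/-- Operational bound via the Choi rank: if `J` is the Choi state of a channel
(`J ≥ 0` and `tr_A J = I/d`), `ρ_x = (I ⊗ U_xᵗ) J (I ⊗ U_xᵗ)†` for unitaries
`U_x`, and conclusive `k`-state exclusion is possible, i.e. `∑ₓ Πₓ ≤ (N−k)I`,
then `N·r_c ≤ (N−k)·d²` where `r_c = rank J`. -/
theorem choi_rank_exclusion_bound {d N k : ℕ} (hd : 0 < d) (hkN : k ≤ N)
    (J : Matrix (Fin d × Fin d) (Fin d × Fin d) ℂ)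
    (hJ : J.PosSemidef)
    (hJtr : ptraceA J = ((d : ℂ)⁻¹) • (1 : Matrix (Fin d) (Fin d) ℂ))
    (U : Fin N → Matrix (Fin d) (Fin d) ℂ)
    (hU : ∀ x, U x ∈ Matrix.unitaryGroup (Fin d) ℂ)
    (ρ : Fin N → Matrix (Fin d × Fin d) (Fin d × Fin d) ℂ)
    (hρ : ∀ x, ρ x = ((1 : Matrix (Fin d) (Fin d) ℂ) ⊗ₖ (U x)ᵀ) * J *
        ((1 : Matrix (Fin d) (Fin d) ℂ) ⊗ₖ (U x)ᵀ)ᴴ)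
    (P : Fin N → Matrix (Fin d × Fin d) (Fin d × Fin d) ℂ)
    (hP : ∀ x, IsSupportProjection (ρ x) (P x))
    (hLoewner : ((((N - k : ℕ) : ℂ) •
        (1 : Matrix (Fin d × Fin d) (Fin d × Fin d) ℂ)) - ∑ x, P x).PosSemidef) :
    N * J.rank ≤ (N - k) * d ^ 2 :=
  choi_rank_exclusion_bound_general J U hU ρ hρ P hP hLoewner
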